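/- For the inverse Sibuya process L_α, the probability mass function is P(L_α(t) = m) = ∑_{r=0}^{m} (-1)^r binom(m, r) binom(t - αr - α, t) for all t, m ∈ ℕ_0. -/

import Mathlib

open MeasureTheory ProbabilityTheory

/-- Generalized binomial coefficient `binom(x, k) = x(x-1)⋯(x-k+1)/k!` for real `x`. -/
noncomputable def gbinom (x : ℝ) (k : ℕ) : ℝ :=
  (∏ i ∈ Finset.range k, (x - i)) / (Nat.factorial k)

/-- Sibuya(α) probability mass function. -/
noncomputable def sibuya (α : ℝ) (k : ℕ) : ℝ :=
  if k = 0 then 0 else (-1 : ℝ) ^ (k - 1) * gbinom α k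

/-!
Let `S n = Z 0 + ⋯ + Z (n - 1)`. Since the Sibuya law has no atom at `0`, the partial sums are
almost surely strictly increasing, so `L t = m` iff `S m ≤ t < S (m + 1)` and
`P(L t = m) = P(S m ≤ t) - P(S (m + 1) ≤ t)`.

The Sibuya law has generating function `1 - (1 - z)^α`, so in `u` the generating function of
`P(S n ≤ u)` is `(1 - (1 - z)^α)^n / (1 - z) = ∑ r, (-1)^r C(n, r) (1 - z)^(α r - 1)`, whose
coefficients are `binom(u - α r, u)`. Without power series this becomes an induction on `n`:
conditioning on the last jump, the step is a convolution of the Sibuya law with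
`binom(u - β, u) = (-1)^u binom(β - 1, u)`, evaluated by Chu–Vandermonde.
-/

open Finset

lemma gbinom_eq_choose (x : ℝ) (k : ℕ) : gbinom x k = Ring.choose x k := by
  rw [Ring.choose_eq_smul, ← Polynomial.aeval_eq_smeval, Polynomial.aeval_def,
    Polynomial.eval₂_eq_eval_map, descPochhammer_map,
    descPochhammer_eval_eq_prod_range, gbinom, smul_eq_mul, inv_mul_eq_div]

lemma gbinom_natCast_self (n : ℕ) : gbinom n n = 1 := by
  rw [gbinom_eq_choose, Ring.choose_natCast, Nat.choose_self, Nat.cast_one]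

lemma gbinom_natCast_sub (n : ℕ) (β : ℝ) : gbinom (n - β) n = (-1) ^ n * gbinom (β - 1) n := by
  have h := Ring.choose_neg (1 - β) n
  rw [neg_sub, show 1 - β + n - 1 = (n : ℝ) - β by ring, Units.smul_def, zsmul_eq_mul,
    Int.cast_negOnePow_natCast] at h
  rw [gbinom_eq_choose, gbinom_eq_choose, h, ← mul_assoc, ← mul_pow, neg_one_mul, neg_neg,
    one_pow, one_mul]

lemma gbinom_add (x y : ℝ) (n : ℕ) :
    gbinom (x + y) n = ∑ k ∈ range (n + 1), gbinom x k * gbinom y (n - k) := by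
  simp only [gbinom_eq_choose]
  rw [Ring.add_choose_eq n (Commute.all x y), Nat.sum_antidiagonal_eq_sum_range_succ
    (fun i j => Ring.choose x i * Ring.choose y j)]

lemma sum_alternating_choose_succ {R : Type*} [CommRing R] (f : ℕ → R) (n : ℕ) :
    ∑ r ∈ range (n + 2), (-1) ^ r * ((n + 1).choose r : R) * f r
      = ∑ r ∈ range (n + 1), (-1) ^ r * (n.choose r : R) * (f r - f (r + 1)) := by
  have := sum_choose_succ_mul (fun i _ => (-1 : R) ^ i * f i) n
  simp only [← mul_assoc, mul_comm _ ((-1 : R) ^ _)] at this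
  rw [this, ← sum_add_distrib]
  refine sum_congr rfl fun r _ => ?_
  ring

lemma sibuya_eq_ite_sub (α : ℝ) (k : ℕ) :
    sibuya α k = (if k = 0 then 1 else 0) - (-1) ^ k * gbinom α k := by
  rcases k with _ | k
  · simp [sibuya, gbinom]
  · simp [sibuya, pow_succ]

lemma sum_sibuya_mul_gbinom (α β : ℝ) (u : ℕ) :
    ∑ k ∈ range (u + 1), sibuya α k * gbinom ((u - k : ℕ) - β) (u - k)
      = gbinom (u - β) u - gbinom (u - β - α) u := by
  have hsign : ∀ k ∈ range (u + 1), (-1) ^ k * gbinom α k * gbinom ((u - k : ℕ) - β) (u - k)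
      = (-1) ^ u * (gbinom α k * gbinom (β - 1) (u - k)) := by
    intro k hk
    rw [gbinom_natCast_sub, ← mul_assoc, mul_right_comm _ (gbinom α k), ← pow_add,
      Nat.add_sub_cancel' (Nat.lt_succ_iff.mp (mem_range.mp hk))]
    ring
  simp only [sibuya_eq_ite_sub, sub_mul, sum_sub_distrib, ite_mul, one_mul, zero_mul,
    sum_ite_eq', mem_range, Nat.zero_lt_succ, if_true, Nat.sub_zero]
  rw [sum_congr rfl hsign, ← mul_sum, ← gbinom_add, sub_sub (u : ℝ), gbinom_natCast_sub u (β + α)]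
  congr 3
  ring

lemma sSup_setOf_le_eq_iff {s : ℕ → ℕ} (hs : StrictMono s) {t m : ℕ} (h0 : s 0 ≤ t) :
    sSup {n | s n ≤ t} = m ↔ s m ≤ t ∧ t < s (m + 1) := by
  have hbdd : BddAbove {n | s n ≤ t} := ⟨t, fun n hn => (hs.id_le n).trans hn⟩
  have hne : {n | s n ≤ t}.Nonempty := ⟨0, h0⟩
  have hgreatest : IsGreatest {n | s n ≤ t} (sSup {n | s n ≤ t}) :=
    ⟨Nat.sSup_mem hne hbdd, fun n hn => le_csSup hbdd hn⟩
  constructor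
  · rintro rfl
    exact ⟨hgreatest.1, lt_of_not_ge fun h => (hgreatest.2 h).not_gt (Nat.lt_succ_self _)⟩
  · rintro ⟨hm, hlt⟩
    exact hgreatest.unique ⟨hm, fun n hn => Nat.lt_succ_iff.mp (hs.lt_iff_lt.mp (hn.trans_lt hlt))⟩

lemma strictMono_sum_range {Z : ℕ → ℕ} (hZ : ∀ i, Z i ≠ 0) :
    StrictMono fun n => ∑ j ∈ range n, Z j :=
  strictMono_nat_of_lt_succ fun n => by
    rw [sum_range_succ]
    exact Nat.lt_add_of_pos_right (Nat.pos_of_ne_zero (hZ n))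

section PartialSums

variable {Ω : Type*} [MeasurableSpace Ω] {μ : Measure Ω} {Z : ℕ → Ω → ℕ}

lemma measurableSet_sum_range_le (hmeas : ∀ i, Measurable (Z i)) (n u : ℕ) :
    MeasurableSet {ω | ∑ j ∈ range n, Z j ω ≤ u} :=
  measurableSet_le (Finset.measurable_sum _ fun j _ => hmeas j) measurable_const

lemma measureReal_sum_range_succ_le [IsFiniteMeasure μ] (hmeas : ∀ i, Measurable (Z i))
    (hindep : iIndepFun Z μ) (n u : ℕ) :
    μ.real {ω | ∑ j ∈ range (n + 1), Z j ω ≤ u}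
      = ∑ k ∈ range (u + 1),
          μ.real {ω | Z n ω = k} * μ.real {ω | ∑ j ∈ range n, Z j ω ≤ u - k} := by
  have hset : {ω | ∑ j ∈ range (n + 1), Z j ω ≤ u}
      = ⋃ k ∈ range (u + 1), {ω | Z n ω = k} ∩ {ω | ∑ j ∈ range n, Z j ω ≤ u - k} := by
    ext ω
    simp only [sum_range_succ, Set.mem_ofPred_eq, Set.mem_iUnion, Set.mem_inter_iff, mem_range,
      exists_prop, Nat.lt_succ_iff]
    exact ⟨fun h => ⟨Z n ω, by omega, rfl, by omega⟩, fun ⟨k, _, hZ, hS⟩ => by omega⟩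
  have hdisj : (range (u + 1) : Set ℕ).PairwiseDisjoint
      fun k => {ω | Z n ω = k} ∩ {ω | ∑ j ∈ range n, Z j ω ≤ u - k} :=
    fun a _ b _ hab => Set.disjoint_left.2 fun ω ha hb => hab (ha.1.symm.trans hb.1)
  have hind : IndepFun (∑ j ∈ range n, Z j) (Z n) μ := hindep.indepFun_sum_range_succ hmeas n
  rw [hset, measureReal_biUnion_finset hdisj
    fun k _ => (hmeas n (measurableSet_singleton k)).inter (measurableSet_sum_range_le hmeas n _)]
  refine sum_congr rfl fun k _ => ?_
  have hprod : μ ({ω | Z n ω = k} ∩ {ω | ∑ j ∈ range n, Z j ω ≤ u - k})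
      = μ {ω | Z n ω = k} * μ {ω | ∑ j ∈ range n, Z j ω ≤ u - k} := by
    rw [Set.inter_comm, mul_comm]
    simpa only [Set.preimage, Finset.sum_apply, Set.mem_Iic, Set.mem_singleton_iff] using
      hind.measure_inter_preimage_eq_mul _ _ measurableSet_Iic (measurableSet_singleton k)
  simp only [measureReal_def, hprod, ENNReal.toReal_mul]

lemma measureReal_sum_range_le_of_sibuya [IsProbabilityMeasure μ] {α : ℝ}
    (hmeas : ∀ i, Measurable (Z i)) (hindep : iIndepFun Z μ)
    (hlaw : ∀ i k, μ.real {ω | Z i ω = k} = sibuya α k) (n u : ℕ) :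
    μ.real {ω | ∑ j ∈ range n, Z j ω ≤ u}
      = ∑ r ∈ range (n + 1), (-1) ^ r * (n.choose r : ℝ) * gbinom (u - α * r) u := by
  induction n generalizing u with
  | zero => simp [gbinom_natCast_self]
  | succ n ih =>
    simp only [measureReal_sum_range_succ_le hmeas hindep, hlaw, ih, mul_sum]
    rw [sum_comm, sum_alternating_choose_succ]
    refine sum_congr rfl fun r _ => ?_
    rw [Nat.cast_succ, mul_add_one, ← sub_sub, ← sum_sibuya_mul_gbinom, mul_sum]
    exact sum_congr rfl fun k _ => by ring

lemma measureReal_sSup_setOf_sum_range_le_eq [IsFiniteMeasure μ] (hmeas : ∀ i, Measurable (Z i))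
    (hpos : ∀ i, μ {ω | Z i ω = 0} = 0) (t m : ℕ) :
    μ.real {ω | sSup {n | ∑ j ∈ range n, Z j ω ≤ t} = m}
      = μ.real {ω | ∑ j ∈ range m, Z j ω ≤ t} - μ.real {ω | ∑ j ∈ range (m + 1), Z j ω ≤ t} := by
  have hae : ∀ᵐ ω ∂μ, ∀ i, Z i ω ≠ 0 := ae_all_iff.2 fun i => by simpa [ae_iff] using hpos i
  have hsub : {ω | ∑ j ∈ range (m + 1), Z j ω ≤ t} ⊆ {ω | ∑ j ∈ range m, Z j ω ≤ t} :=
    Set.ofPred_subset_ofPred.2 fun ω =>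
      (sum_le_sum_of_subset (range_subset_range.2 m.le_succ)).trans
  rw [← measureReal_sdiff hsub (measurableSet_sum_range_le hmeas _ _)]
  refine measureReal_congr (hae.mono fun ω hω => propext ?_)
  exact (sSup_setOf_le_eq_iff (strictMono_sum_range hω) (by simp)).trans
    (and_congr_right' not_le.symm)

end PartialSums

theorem sibuya_inverse_pmf_general
    {Ω : Type*} [MeasurableSpace Ω] (μ : Measure Ω) [IsProbabilityMeasure μ]
    (α : ℝ)
    (Z : ℕ → Ω → ℕ) (hmeas : ∀ i, Measurable (Z i))
    (hindep : iIndepFun Z μ)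
    (hlaw : ∀ i k, (μ {ω | Z i ω = k}).toReal = sibuya α k)
    (S : ℕ → Ω → ℕ) (hS : ∀ n ω, S n ω = ∑ j ∈ Finset.range n, Z j ω)
    (L : ℕ → Ω → ℕ) (hL : ∀ t ω, L t ω = sSup {n : ℕ | S n ω ≤ t})
    (t m : ℕ) :
    (μ {ω | L t ω = m}).toReal
      = ∑ r ∈ Finset.range (m + 1),
          (-1 : ℝ) ^ r * (m.choose r) * gbinom ((t : ℝ) - α * r - α) t := by
  obtain rfl : S = fun n ω => ∑ j ∈ range n, Z j ω := funext fun n => funext (hS n)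
  obtain rfl : L = fun t ω => sSup {n | ∑ j ∈ range n, Z j ω ≤ t} :=
    funext fun t => funext (hL t)
  have hpos : ∀ i, μ {ω | Z i ω = 0} = 0 := fun i =>
    (measureReal_eq_zero_iff).1 ((hlaw i 0).trans (if_pos rfl))
  change μ.real _ = _
  rw [measureReal_sSup_setOf_sum_range_le_eq hmeas hpos,
    measureReal_sum_range_le_of_sibuya hmeas hindep hlaw,
    measureReal_sum_range_le_of_sibuya hmeas hindep hlaw, sum_alternating_choose_succ,
    ← sum_sub_distrib]
  refine sum_congr rfl fun r _ => ?_
  rw [Nat.cast_succ, mul_add_one, ← sub_sub]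
  ring

/-- For the inverse Sibuya process `L_α`, the probability mass function is
`P(L_α(t) = m) = ∑_{r=0}^{m} (-1)^r binom(m, r) binom(t - αr - α, t)` for all `t, m ∈ ℕ`. -/
theorem sibuya_inverse_pmf
    {Ω : Type*} [MeasurableSpace Ω] (μ : Measure Ω) [IsProbabilityMeasure μ]
    (α : ℝ) (hα : α ∈ Set.Ioo (0 : ℝ) 1)
    (Z : ℕ → Ω → ℕ) (hmeas : ∀ i, Measurable (Z i))
    (hindep : iIndepFun Z μ)
    (hlaw : ∀ i k, (μ {ω | Z i ω = k}).toReal = sibuya α k)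
    (S : ℕ → Ω → ℕ) (hS : ∀ n ω, S n ω = ∑ j ∈ Finset.range n, Z j ω)
    (L : ℕ → Ω → ℕ) (hL : ∀ t ω, L t ω = sSup {n : ℕ | S n ω ≤ t})
    (t m : ℕ) :
    (μ {ω | L t ω = m}).toReal
      = ∑ r ∈ Finset.range (m + 1),
          (-1 : ℝ) ^ r * (m.choose r) * gbinom ((t : ℝ) - α * r - α) t :=
  sibuya_inverse_pmf_general μ α Z hmeas hindep hlaw S hS L hL t m
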